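/- arXiv:math/0505157 — 4 statements merged into one kernel-verified Lean document; each statement's English description precedes it below -/
import Mathlib

section
/- Let A and Ã be invertible n × n real matrices and X an invertible n × n real matrix. Set E = Xᵀ A X − Ã, B = X Ã⁻¹ Xᵀ, and F = X⁻ᵀ E X⁻¹. Then, in any submultiplicative matrix norm ‖·‖, the first-order approximate inverse satisfies ‖A⁻¹ − (B − B F B)‖ ≤ ‖A⁻¹‖ · ‖F‖² · ‖B‖², so the error in the approximate inverse B − B F B is of second order in ‖F‖. -/
open Matrix

/-- With `E = Xᵀ A X − Ã`, `B = X Ã⁻¹ Xᵀ` and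
`F = X⁻ᵀ E X⁻¹`, the first-order approximate inverse `B − B F B` satisfies, in
any submultiplicative matrix norm `ν`,
`ν (A⁻¹ − (B − B F B)) ≤ ν A⁻¹ * ν F ^ 2 * ν B ^ 2`. -/
theorem approximate_inverse_error_second_order {n : ℕ}
    (A Atil X : Matrix (Fin n) (Fin n) ℝ)
    (hA : IsUnit A) (hAtil : IsUnit Atil) (hX : IsUnit X)
    (ν : Matrix (Fin n) (Fin n) ℝ → ℝ)
    (hnonneg : ∀ M, 0 ≤ ν M)
    (hdef : ∀ M, ν M = 0 ↔ M = 0)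
    (htri : ∀ M N, ν (M + N) ≤ ν M + ν N)
    (hsmul : ∀ (c : ℝ) M, ν (c • M) = |c| * ν M)
    (hsubmult : ∀ M N, ν (M * N) ≤ ν M * ν N) :
    let E := Xᵀ * A * X - Atil
    let B := X * Atil⁻¹ * Xᵀ
    let F := (Xᵀ)⁻¹ * E * X⁻¹
    ν (A⁻¹ - (B - B * F * B)) ≤ ν A⁻¹ * ν F ^ 2 * ν B ^ 2 := by
  intro E B F
  have hAd : IsUnit A.det := (Matrix.isUnit_iff_isUnit_det A).mp hA
  have hAtd : IsUnit Atil.det := (Matrix.isUnit_iff_isUnit_det Atil).mp hAtil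
  have hXd : IsUnit X.det := (Matrix.isUnit_iff_isUnit_det X).mp hX
  have hXtd : IsUnit Xᵀ.det := by rwa [Matrix.det_transpose]
  have h2 : A⁻¹ * A = 1 := Matrix.nonsing_inv_mul _ hAd
  have h3 : Atil * Atil⁻¹ = 1 := Matrix.mul_nonsing_inv _ hAtd
  have h4 : X⁻¹ * X = 1 := Matrix.nonsing_inv_mul _ hXd
  have h5 : (Xᵀ)⁻¹ * Xᵀ = 1 := Matrix.nonsing_inv_mul _ hXtd
  have hab : F * B = A * B - 1 := by
    show (Xᵀ)⁻¹ * E * X⁻¹ * (X * Atil⁻¹ * Xᵀ) = A * (X * Atil⁻¹ * Xᵀ) - 1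
    simp only [E, Matrix.sub_mul, Matrix.mul_sub, Matrix.mul_assoc,
      Matrix.nonsing_inv_mul_cancel_left _ _ hXd,
      Matrix.nonsing_inv_mul_cancel_left _ _ hXtd,
      Matrix.mul_nonsing_inv_cancel_left _ _ hAtd, h5]
  have key : A⁻¹ - (B - B * F * B) = A⁻¹ * (F * B) * (F * B) := by
    have expand : A⁻¹ - (B - B * F * B)
        = A⁻¹ * (1 - A * B + A * B * (F * B)) := by
      rw [Matrix.mul_add, Matrix.mul_sub, Matrix.mul_one,
        show A⁻¹ * (A * B) = (A⁻¹ * A) * B by simp [Matrix.mul_assoc],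
        show A⁻¹ * (A * B * (F * B)) = (A⁻¹ * A) * (B * (F * B)) by simp [Matrix.mul_assoc],
        h2, Matrix.one_mul, Matrix.one_mul]
      noncomm_ring
    rw [expand]
    have hab2 : A * B = 1 + F * B := by rw [hab]; noncomm_ring
    rw [hab2]
    noncomm_ring
  rw [key]
  have hFB : ν (F * B) ≤ ν F * ν B := hsubmult F B
  have hFBnn : 0 ≤ ν F * ν B := mul_nonneg (hnonneg F) (hnonneg B)
  calc ν (A⁻¹ * (F * B) * (F * B)) ≤ ν (A⁻¹ * (F * B)) * ν (F * B) := hsubmult _ _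
    _ ≤ (ν A⁻¹ * ν (F * B)) * ν (F * B) :=
        mul_le_mul_of_nonneg_right (hsubmult _ _) (hnonneg _)
    _ ≤ (ν A⁻¹ * (ν F * ν B)) * (ν F * ν B) := by
        apply mul_le_mul (mul_le_mul_of_nonneg_left hFB (hnonneg _)) hFB (hnonneg _)
        exact mul_nonneg (hnonneg _) hFBnn
    _ = ν A⁻¹ * ν F ^ 2 * ν B ^ 2 := by ring
end

section
/- Let M₀ be an n_I × n_L real matrix, S a symmetric n_L × n_L real matrix, and let Q (n_L × r) and Q̃ (n_L × (n_L−r)) satisfy QᵀQ = I, Q̃ᵀQ̃ = I, QᵀQ̃ = 0, M₀ Q̃ = 0, and QQᵀ M₀ᵀ = M₀ᵀ (Q spans the row space of M₀). Suppose W is an n_I × n_L real matrix with M₀ᵀ W = QQᵀ (W is a transposed pseudo-inverse of M₀ᵀ). Then the choice dY = (1/2)·W·S·(I + Q̃Q̃ᵀ) cancels the first two blocks of the linearized error: Qᵀ ( S − M₀ᵀ dY − dYᵀ M₀ ) Q = 0 and Qᵀ ( S − M₀ᵀ dY − dYᵀ M₀ ) Q̃ = 0. -/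
open Matrix

/-- With `Q` spanning the row space of `M₀`, `Q̃` its null
space, and `W` a transposed pseudo-inverse of `M₀ᵀ` (`M₀ᵀ W = Q Qᵀ`), the
choice `dY = ½ W S (I + Q̃ Q̃ᵀ)` cancels the first two blocks of the linearized
error: `Qᵀ (S − M₀ᵀ dY − dYᵀ M₀) Q = 0` and `Qᵀ (S − M₀ᵀ dY − dYᵀ M₀) Q̃ = 0`. -/
theorem dY_cancels_spanned_blocks {nI nL r : ℕ}
    (M₀ : Matrix (Fin nI) (Fin nL) ℝ)
    (S : Matrix (Fin nL) (Fin nL) ℝ) (hS : Sᵀ = S)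
    (Q : Matrix (Fin nL) (Fin r) ℝ) (Qtil : Matrix (Fin nL) (Fin (nL - r)) ℝ)
    (hQ : Qᵀ * Q = 1) (hQtil : Qtilᵀ * Qtil = 1) (horth : Qᵀ * Qtil = 0)
    (hnull : M₀ * Qtil = 0) (hspan : Q * Qᵀ * M₀ᵀ = M₀ᵀ)
    (W : Matrix (Fin nI) (Fin nL) ℝ) (hW : M₀ᵀ * W = Q * Qᵀ) :
    let dY : Matrix (Fin nI) (Fin nL) ℝ :=
      (1 / 2 : ℝ) • (W * S * (1 + Qtil * Qtilᵀ))
    Qᵀ * (S - M₀ᵀ * dY - dYᵀ * M₀) * Q = 0 ∧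
      Qᵀ * (S - M₀ᵀ * dY - dYᵀ * M₀) * Qtil = 0 := by
  intro dY
  have hWt : Wᵀ * M₀ = Q * Qᵀ := by
    have := congrArg Matrix.transpose hW
    simpa [Matrix.transpose_mul] using this
  have horth' : Qtilᵀ * Q = 0 := by
    have := congrArg Matrix.transpose horth
    simpa [Matrix.transpose_mul] using this
  have e1 : ∀ (X : Matrix (Fin r) (Fin nL) ℝ), Qᵀ * (Q * X) = X := by
    intro X; rw [← Matrix.mul_assoc, hQ, Matrix.one_mul]
  have e2 : ∀ (X : Matrix (Fin (nL-r)) (Fin nL) ℝ), Qᵀ * (Qtil * X) = 0 := by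
    intro X; rw [← Matrix.mul_assoc, horth, Matrix.zero_mul]
  have e3 : ∀ (X : Matrix (Fin r) (Fin nL) ℝ), Qtilᵀ * (Q * X) = 0 := by
    intro X; rw [← Matrix.mul_assoc, horth', Matrix.zero_mul]
  have e4 : ∀ (X : Matrix (Fin (nL-r)) (Fin nL) ℝ), Qtilᵀ * (Qtil * X) = X := by
    intro X; rw [← Matrix.mul_assoc, hQtil, Matrix.one_mul]
  have e5 : ∀ (X : Matrix (Fin nL) (Fin nL) ℝ), M₀ᵀ * (W * X) = Q * (Qᵀ * X) := by
    intro X; rw [← Matrix.mul_assoc, hW, Matrix.mul_assoc]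
  constructor <;>
  · show _ = _
    simp only [dY, Matrix.mul_sub, Matrix.sub_mul, Matrix.smul_mul, Matrix.mul_smul,
      Matrix.transpose_smul, Matrix.transpose_mul, Matrix.transpose_add,
      Matrix.transpose_one, Matrix.transpose_transpose, hS, Matrix.add_mul,
      Matrix.mul_add, Matrix.mul_one, Matrix.one_mul, Matrix.mul_assoc,
      e1, e2, e3, e4, e5, hWt, hQ, hQtil, horth, horth', hW, Matrix.mul_zero, Matrix.zero_mul, add_zero, zero_add]
    module
end

section
/- Let M₀ be an n_I × n_L real matrix and let Q be an n_L × r real matrix with QᵀQ = I and QQᵀ M₀ᵀ = M₀ᵀ (Q spans the row space of M₀), and let W be an n_I × n_L real matrix with M₀ᵀ W = QQᵀ. Then for every antisymmetric n_L × n_L real matrix S (Sᵀ = −S), the addition V = W·S·QQᵀ to dY leaves the linearized error term unchanged: M₀ᵀ (dY + V) + (dY + V)ᵀ M₀ = M₀ᵀ dY + dYᵀ M₀ for every n_I × n_L real matrix dY. Equivalently, M₀ᵀ V = QQᵀ S QQᵀ is antisymmetric, so such V lie in the null space of the linearized minimization. -/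
open Matrix

/-- With `Q` spanning the row space of `M₀`
(`Qᵀ Q = I`, `Q Qᵀ M₀ᵀ = M₀ᵀ`) and `W` a transposed pseudo-inverse of `M₀ᵀ`
(`M₀ᵀ W = Q Qᵀ`), for every antisymmetric `S` the addition `V = W S Q Qᵀ` to
`dY` leaves the linearized error term unchanged; equivalently
`M₀ᵀ V = Q Qᵀ S Q Qᵀ` is antisymmetric, so such `V` lie in the null space of
the linearized minimization. -/
theorem antisymmetric_nullspace_of_linearized_error {nI nL r : ℕ}
    (M₀ : Matrix (Fin nI) (Fin nL) ℝ)
    (Q : Matrix (Fin nL) (Fin r) ℝ)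
    (hQ : Qᵀ * Q = 1) (hspan : Q * Qᵀ * M₀ᵀ = M₀ᵀ)
    (W : Matrix (Fin nI) (Fin nL) ℝ) (hW : M₀ᵀ * W = Q * Qᵀ)
    (S : Matrix (Fin nL) (Fin nL) ℝ) (hS : Sᵀ = -S) :
    let V : Matrix (Fin nI) (Fin nL) ℝ := W * S * (Q * Qᵀ)
    (∀ dY : Matrix (Fin nI) (Fin nL) ℝ,
        M₀ᵀ * (dY + V) + (dY + V)ᵀ * M₀ = M₀ᵀ * dY + dYᵀ * M₀) ∧
      M₀ᵀ * V = Q * Qᵀ * S * (Q * Qᵀ) ∧ (M₀ᵀ * V)ᵀ = -(M₀ᵀ * V) := by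
  intro V
  have h1 : M₀ᵀ * V = Q * Qᵀ * S * (Q * Qᵀ) := by
    show M₀ᵀ * (W * S * (Q * Qᵀ)) = _
    rw [show M₀ᵀ * (W * S * (Q * Qᵀ)) = M₀ᵀ * W * S * (Q * Qᵀ) by
      simp [Matrix.mul_assoc], hW]
  have h2 : (M₀ᵀ * V)ᵀ = -(M₀ᵀ * V) := by
    rw [h1]
    simp [Matrix.transpose_mul, hS, Matrix.mul_assoc, Matrix.neg_mul,
      Matrix.mul_neg]
  refine ⟨fun dY => ?_, h1, h2⟩
  have h3 : Vᵀ * M₀ = -(M₀ᵀ * V) := by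
    have := congrArg Matrix.transpose h2
    have h5 : -(Vᵀ * M₀) = M₀ᵀ * V := by simpa using this.symm
    exact neg_eq_iff_eq_neg.mp h5
  rw [Matrix.mul_add, Matrix.transpose_add, Matrix.add_mul, h3]
  abel
end

section
/- Fix n, m ≥ 1 and x ∈ ℝ, and let A_λ denote the discretized 2D Helmholtz matrix at parameter λ. Let D be the diagonal matrix indexed by (Fin n) × (Fin m) with D((i,j),(i,j)) = (−1)^(i+j). Then D A_{4−x} D = −A_{4+x}; that is, the Helmholtz matrix at λ = 4 − x is mapped to (the negative of) the one at λ = 4 + x by a checkerboard diagonal scaling. -/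
open Matrix

/-- The discretized 2D Helmholtz matrix at parameter `lam`: the real symmetric
matrix indexed by `(Fin n) × (Fin m)` with diagonal entries `lam − 4`, entries
`1` between nearest neighbors on the grid, and `0` otherwise. -/
def helmholtz (n m : ℕ) (lam : ℝ) :
    Matrix (Fin n × Fin m) (Fin n × Fin m) ℝ := fun p q =>
  if p = q then lam - 4
  else if ((p.1 : ℤ) - (q.1 : ℤ)).natAbs + ((p.2 : ℤ) - (q.2 : ℤ)).natAbs = 1
    then 1 else 0

/-- With `D` the checkerboard diagonal matrix
`D((i,j),(i,j)) = (−1)^(i+j)`, one has `D A_{4−x} D = −A_{4+x}`. -/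
theorem helmholtz_checkerboard_symmetry (n m : ℕ) (hn : 1 ≤ n) (hm : 1 ≤ m)
    (x : ℝ) :
    let D : Matrix (Fin n × Fin m) (Fin n × Fin m) ℝ :=
      Matrix.diagonal fun p => (-1 : ℝ) ^ ((p.1 : ℕ) + (p.2 : ℕ))
    D * helmholtz n m (4 - x) * D = -helmholtz n m (4 + x) := by
  intro D
  ext p q
  show (D * helmholtz n m (4 - x) * D) p q = -(helmholtz n m (4 + x) p q)
  rw [Matrix.mul_diagonal, Matrix.diagonal_mul]
  by_cases hpq : p = q
  · subst hpq
    have he : ((-1 : ℝ)) ^ ((p.1 : ℕ) + (p.2 : ℕ)) * ((-1 : ℝ)) ^ ((p.1 : ℕ) + (p.2 : ℕ)) = 1 := by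
      rw [← pow_add]
      exact Even.neg_one_pow ⟨(p.1 : ℕ) + (p.2 : ℕ), rfl⟩
    simp only [helmholtz, if_pos rfl, if_true]
    linear_combination (-x) * he
  · by_cases hnb : ((p.1 : ℤ) - (q.1 : ℤ)).natAbs + ((p.2 : ℤ) - (q.2 : ℤ)).natAbs = 1
    · have hodd : Odd (((p.1 : ℕ) + (p.2 : ℕ)) + ((q.1 : ℕ) + (q.2 : ℕ))) := by
        rw [Nat.odd_iff]
        omega
      have he : ((-1 : ℝ)) ^ ((p.1 : ℕ) + (p.2 : ℕ)) * ((-1 : ℝ)) ^ ((q.1 : ℕ) + (q.2 : ℕ)) = -1 := by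
        rw [← pow_add]
        exact Odd.neg_one_pow hodd
      simp only [helmholtz, if_neg hpq, if_pos hnb]
      linear_combination he
    · simp [helmholtz, if_neg hpq, if_neg hnb]
end
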